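/- Let μ and ν be bistochastic measures on 𝕋^d and let η be a generalized flow with (e₀,e₁)♯η = μ and 𝒜(η) < ∞. Then there exists a generalized flow η′ with (e₀,e₁)♯η′ = ν and 𝒜(η′) ≤ (√𝒜(η) + d_MK(μ,ν))². -/

import Mathlib

open MeasureTheory ENNReal Set Function

noncomputable section

namespace Brenier

instance fact01 : Fact ((0:ℝ) < 1) := ⟨one_pos⟩

/-- The flat torus `ℝ^d/ℤ^d`. -/
abbrev Td (d : ℕ) := Fin d → AddCircle (1:ℝ)

/-- Euclidean space `ℝ^d`. -/
abbrev Rd (d : ℕ) := EuclideanSpace ℝ (Fin d)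

/-- The unit interval `[0,1] ⊆ ℝ`. -/
abbrev UI := Set.Icc (0:ℝ) 1

instance : IsProbabilityMeasure (volume : Measure (AddCircle (1:ℝ))) :=
  ⟨by rw [AddCircle.measure_univ]; simp⟩

instance (d : ℕ) : IsProbabilityMeasure (volume : Measure (Td d)) :=
  inferInstanceAs (IsProbabilityMeasure (Measure.pi fun _ => volume))

/-- The geodesic ("Euclidean combination") distance on the torus. -/
def torusDist {d : ℕ} (x y : Td d) : ℝ := Real.sqrt (∑ i, dist (x i) (y i) ^ 2)

/-- The squared product metric `D₂²` on `𝕋^d × 𝕋^d`. -/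
def D2sq {d : ℕ} (p q : Td d × Td d) : ℝ := torusDist p.1 q.1 ^ 2 + torusDist p.2 q.2 ^ 2

/-- The space `𝒞 = C⁰([0,1];𝕋^d)` of continuous paths in the torus. -/
abbrev TPath (d : ℕ) := C(UI, Td d)

instance (d : ℕ) : MeasurableSpace (TPath d) := borel _
instance (d : ℕ) : BorelSpace (TPath d) := ⟨rfl⟩

/-- Clamping of a real time to `[0,1]`. -/
def clamp (t : ℝ) : UI := ⟨max 0 (min 1 t), le_max_left 0 _, max_le zero_le_one (min_le_left 1 t)⟩

/-- Evaluation `e_t` of a path at time `t`. -/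
def evalAt {d : ℕ} (t : ℝ) (ω : TPath d) : Td d := ω (clamp t)

/-- The endpoints map `ω ↦ (ω(0), ω(1))`. -/
def endpoints {d : ℕ} (ω : TPath d) : Td d × Td d := (evalAt 0 ω, evalAt 1 ω)

/-- The 2-energy `∫₀¹ |ω̇|²` of a path, defined as a supremum over partitions; it is
finite iff `ω ∈ AC²([0,1];𝕋^d)`, in which case it coincides with `∫₀¹ |ω̇(t)|² dt`. -/
def energy {d : ℕ} (ω : TPath d) : ℝ≥0∞ :=
  ⨆ (n : ℕ) (t : Fin (n + 1) → UI) (_ : Monotone t),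
    ∑ i : Fin n,
      ENNReal.ofReal (torusDist (ω (t i.castSucc)) (ω (t i.succ)) ^ 2) /
        ENNReal.ofReal ((t i.succ : ℝ) - (t i.castSucc : ℝ))

/-- The action `A(ω) = (1/2)∫₀¹ |ω̇|²` of a path (`+∞` if not absolutely continuous). -/
def action {d : ℕ} (ω : TPath d) : ℝ≥0∞ := energy ω / 2

/-- The action `𝒜(η) = ∫ A(ω) dη(ω)` of a generalized flow. -/
def flowAction {d : ℕ} (η : Measure (TPath d)) : ℝ≥0∞ := ∫⁻ ω, action ω ∂η

/-- A probability measure on `𝕋^d × 𝕋^d` is bistochastic if both marginals are Lebesgue. -/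
def Bistochastic {d : ℕ} (γ : Measure (Td d × Td d)) : Prop :=
  IsProbabilityMeasure γ ∧ γ.map Prod.fst = volume ∧ γ.map Prod.snd = volume

/-- Admissibility for the problem `Pb(γ, ρ)` with prescribed marginals `ρ_t`. -/
def AdmissibleVar {d : ℕ} (γ : Measure (Td d × Td d)) (ρ : ℝ → Measure (Td d))
    (η : Measure (TPath d)) : Prop :=
  IsProbabilityMeasure η ∧ η.map endpoints = γ ∧ ∀ t ∈ Icc (0:ℝ) 1, η.map (evalAt t) = ρ t

/-- The optimal action `𝒜(γ, ρ)` (`+∞` when no admissible flow exists). -/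
def optActionVar {d : ℕ} (γ : Measure (Td d × Td d)) (ρ : ℝ → Measure (Td d)) : ℝ≥0∞ :=
  ⨅ (η : Measure (TPath d)) (_ : AdmissibleVar γ ρ η), flowAction η

/-- The optimal action `𝒜(γ)` of Brenier's problem `Pb(γ)`. -/
def optAction {d : ℕ} (γ : Measure (Td d × Td d)) : ℝ≥0∞ := optActionVar γ (fun _ => volume)

/-- Couplings between two measures. -/
def Coupling {X : Type*} [MeasurableSpace X] (μ ν : Measure X) (Γ : Measure (X × X)) : Prop :=
  Γ.map Prod.fst = μ ∧ Γ.map Prod.snd = ν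

/-- The quadratic Monge–Kantorovich (Wasserstein-2) distance on measures on `𝕋^d × 𝕋^d`,
for the product metric `D₂`. -/
def dMK {d : ℕ} (μ ν : Measure (Td d × Td d)) : ℝ :=
  Real.sqrt (⨅ (Γ : Measure ((Td d × Td d) × (Td d × Td d))) (_ : Coupling μ ν Γ),
    ∫⁻ p, ENNReal.ofReal (D2sq p.1 p.2) ∂Γ).toReal

/-! ### Auxiliary lemmas -/

section Aux

/-- The representative of an element of `AddCircle 1` in `[-1/2, 1/2)`. -/
def liftRep (z : AddCircle (1:ℝ)) : ℝ :=
  ((AddCircle.equivIco 1 (-(1/2) : ℝ) z : Ico (-(1/2) : ℝ) (-(1/2) + 1)) : ℝ)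

lemma liftRep_mem (z : AddCircle (1:ℝ)) : liftRep z ∈ Ico (-(1/2) : ℝ) (1/2) := by
  unfold liftRep
  have h := (AddCircle.equivIco 1 (-(1/2) : ℝ) z).2
  exact ⟨h.1, by have := h.2; linarith⟩

lemma coe_liftRep (z : AddCircle (1:ℝ)) : ((liftRep z : ℝ) : AddCircle (1:ℝ)) = z :=
  (AddCircle.equivIco 1 (-(1/2) : ℝ)).symm_apply_apply z

lemma measurable_liftRep : Measurable liftRep :=
  measurable_subtype_coe.comp (AddCircle.measurableEquivIco (T := 1) (-(1/2) : ℝ)).measurable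

lemma norm_liftRep (z : AddCircle (1:ℝ)) : ‖z‖ = |liftRep z| := by
  conv_lhs => rw [← coe_liftRep z]
  rw [AddCircle.norm_eq]
  have h := liftRep_mem z
  have hround : round ((1:ℝ)⁻¹ * liftRep z) = 0 := by
    rw [round_eq, Int.floor_eq_zero_iff]
    constructor
    · simp only [inv_one, one_mul]
      linarith [h.1]
    · simp only [inv_one, one_mul]
      linarith [h.2]
  rw [hround]
  simp

lemma norm_coe_le_abs (u : ℝ) : ‖(u : AddCircle (1:ℝ))‖ ≤ |u| := by
  rw [AddCircle.norm_eq]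
  simp only [inv_one, one_mul, mul_one]
  have := round_le u 0
  simpa using this

lemma addCircle_dist_eq (a b : AddCircle (1:ℝ)) : dist a b = |liftRep (b - a)| := by
  rw [dist_eq_norm, ← norm_neg, neg_sub, norm_liftRep]

end Aux

section TorusDist

variable {d : ℕ}

lemma torusDist_nonneg (x y : Td d) : 0 ≤ torusDist x y := Real.sqrt_nonneg _

lemma torusDist_sq (x y : Td d) : torusDist x y ^ 2 = ∑ i, dist (x i) (y i) ^ 2 := by
  rw [torusDist, Real.sq_sqrt]
  exact Finset.sum_nonneg fun i _ => sq_nonneg _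

lemma sqrt_sum_sq_mono {u w : Fin d → ℝ} (hu : ∀ i, 0 ≤ u i) (huw : ∀ i, u i ≤ w i) :
    Real.sqrt (∑ i, u i ^ 2) ≤ Real.sqrt (∑ i, w i ^ 2) := by
  apply Real.sqrt_le_sqrt
  exact Finset.sum_le_sum fun i _ => pow_le_pow_left₀ (hu i) (huw i) 2

lemma sqrt_sum_sq_eq_norm (u : EuclideanSpace ℝ (Fin d)) (hu : ∀ i, 0 ≤ u i) :
    Real.sqrt (∑ i, u i ^ 2) = ‖u‖ := by
  rw [EuclideanSpace.norm_eq]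
  congr 1
  refine Finset.sum_congr rfl fun i _ => ?_
  rw [Real.norm_eq_abs, sq_abs]

/-- Quadruple triangle inequality for `torusDist`. -/
lemma torusDist_triangle4 (x y x' y' : Td d) :
    torusDist x' y' ≤ torusDist x y + (torusDist x x' + torusDist y y') := by
  set a : EuclideanSpace ℝ (Fin d) := WithLp.toLp 2 (fun i => dist (x i) (x' i)) with ha
  set b : EuclideanSpace ℝ (Fin d) := WithLp.toLp 2 (fun i => dist (x i) (y i)) with hb
  set c : EuclideanSpace ℝ (Fin d) := WithLp.toLp 2 (fun i => dist (y i) (y' i)) with hc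
  have habc : ∀ i, (a + b + c) i = dist (x i) (x' i) + dist (x i) (y i) + dist (y i) (y' i) :=
    fun i => rfl
  have key : torusDist x' y' ≤ ‖a + b + c‖ := by
    rw [← sqrt_sum_sq_eq_norm (a + b + c)
      (fun i => by rw [habc i]; positivity)]
    rw [torusDist]
    refine sqrt_sum_sq_mono (fun i => dist_nonneg) fun i => ?_
    rw [habc i, dist_comm (x i) (x' i)]
    exact dist_triangle4 _ _ _ _
  refine key.trans ?_
  have h2 : ‖a + b + c‖ ≤ ‖a‖ + ‖b‖ + ‖c‖ := norm_add₃_le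
  have hna : ‖a‖ = torusDist x x' := (sqrt_sum_sq_eq_norm a fun i => dist_nonneg).symm
  have hnb : ‖b‖ = torusDist x y := (sqrt_sum_sq_eq_norm b fun i => dist_nonneg).symm
  have hnc : ‖c‖ = torusDist y y' := (sqrt_sum_sq_eq_norm c fun i => dist_nonneg).symm
  rw [hna, hnb, hnc] at h2
  linarith

lemma torusDist_sq_le (x y : Td d) : torusDist x y ^ 2 ≤ (d : ℝ) / 4 := by
  rw [torusDist_sq]
  have : ∀ i, dist (x i) (y i) ^ 2 ≤ (1:ℝ)/4 := by
    intro i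
    have h1 : dist (x i) (y i) ≤ 1/2 := by
      have := AddCircle.norm_le_half_period (1:ℝ) (x := x i - y i) one_ne_zero
      rw [dist_eq_norm]
      simpa using this
    nlinarith [dist_nonneg (x := x i) (y := y i)]
  calc ∑ i, dist (x i) (y i) ^ 2 ≤ ∑ _i : Fin d, (1:ℝ)/4 := Finset.sum_le_sum fun i _ => this i
    _ = (d : ℝ) / 4 := by simp [Finset.sum_const]; ring

lemma continuous_torusDist : Continuous fun p : Td d × Td d => torusDist p.1 p.2 := by
  apply Real.continuous_sqrt.comp
  apply continuous_finset_sum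
  intro i _
  exact (((continuous_apply i).comp continuous_fst).dist
    ((continuous_apply i).comp continuous_snd)).pow 2

lemma continuous_D2sq : Continuous fun p : (Td d × Td d) × (Td d × Td d) => D2sq p.1 p.2 := by
  unfold D2sq
  apply Continuous.add
  · exact ((continuous_torusDist.comp ((continuous_fst.comp continuous_fst).prodMk
      (continuous_fst.comp continuous_snd))).pow 2)
  · exact ((continuous_torusDist.comp ((continuous_snd.comp continuous_fst).prodMk
      (continuous_snd.comp continuous_snd))).pow 2)

end TorusDist

section Geodesic

variable {d : ℕ}

/-- The straight path `s ↦ x + s • r` in the torus. -/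
def geoFun (x : Td d) (r : Fin d → ℝ) : TPath d :=
  ⟨fun s => fun i => x i + ((((s : ℝ) * r i : ℝ)) : AddCircle (1:ℝ)), by
    refine continuous_pi fun i => ?_
    exact continuous_const.add ((AddCircle.continuous_mk' 1).comp
      (continuous_subtype_val.mul continuous_const))⟩

/-- The geodesic path associated to a pair of endpoints. -/
def geo (q : Td d × Td d) : TPath d := geoFun q.1 fun i => liftRep (q.2 i - q.1 i)

lemma continuous_geoFun :
    Continuous fun p : Td d × (Fin d → ℝ) => geoFun p.1 p.2 := by
  let F : C((Td d × (Fin d → ℝ)) × UI, Td d) :=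
    ⟨fun p => fun i => p.1.1 i + ((((p.2 : ℝ) * p.1.2 i : ℝ)) : AddCircle (1:ℝ)), by
      refine continuous_pi fun i => ?_
      refine Continuous.add ?_ ?_
      · exact (continuous_apply i).comp (continuous_fst.comp continuous_fst)
      · exact (AddCircle.continuous_mk' 1).comp
          ((continuous_subtype_val.comp continuous_snd).mul
            ((continuous_apply i).comp (continuous_snd.comp continuous_fst)))⟩
  have : (fun p : Td d × (Fin d → ℝ) => geoFun p.1 p.2) = fun p => F.curry p := by
    funext p
    ext s
    rfl
  rw [this]
  exact F.curry.continuous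

lemma measurable_geo : Measurable (geo (d := d)) := by
  have h1 : Measurable fun q : Td d × Td d => (q.1, fun i => liftRep (q.2 i - q.1 i)) := by
    refine Measurable.prodMk measurable_fst ?_
    refine measurable_pi_lambda _ fun i => ?_
    exact measurable_liftRep.comp
      (((continuous_apply i).comp continuous_snd).sub
        ((continuous_apply i).comp continuous_fst)).measurable
  exact continuous_geoFun.measurable.comp h1

lemma clamp_zero_coe : ((clamp 0 : UI) : ℝ) = 0 := by simp [clamp]

lemma clamp_one_coe : ((clamp 1 : UI) : ℝ) = 1 := by simp [clamp]

lemma evalAt_zero_geo (q : Td d × Td d) : evalAt 0 (geo q) = q.1 := by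
  funext i
  show q.1 i + ((((clamp 0 : UI) : ℝ) * liftRep (q.2 i - q.1 i) : ℝ) : AddCircle (1:ℝ)) = q.1 i
  rw [clamp_zero_coe, zero_mul]
  simp

lemma evalAt_one_geo (q : Td d × Td d) : evalAt 1 (geo q) = q.2 := by
  funext i
  show q.1 i + ((((clamp 1 : UI) : ℝ) * liftRep (q.2 i - q.1 i) : ℝ) : AddCircle (1:ℝ)) = q.2 i
  rw [clamp_one_coe, one_mul, coe_liftRep]
  abel

lemma endpoints_geo : endpoints ∘ (geo (d := d)) = id := by
  funext q
  show (evalAt 0 (geo q), evalAt 1 (geo q)) = q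
  rw [evalAt_zero_geo, evalAt_one_geo]

/-- Telescoping bound for a monotone partition of `[0,1]`. -/
lemma sum_partition_le {n : ℕ} (t : Fin (n + 1) → UI) (ht : Monotone t) :
    ∑ i : Fin n, (((t i.succ : ℝ)) - ((t i.castSucc : ℝ))) ≤ 1 := by
  set f : ℕ → ℝ := fun k => ((t ⟨min k n, Nat.lt_succ_of_le (min_le_right k n)⟩ : UI) : ℝ) with hf
  have hstep : ∀ i : Fin n, ((t i.succ : ℝ)) - ((t i.castSucc : ℝ)) = f (i + 1) - f i := by
    intro i
    have h1 : (⟨min (i + 1) n, Nat.lt_succ_of_le (min_le_right _ n)⟩ : Fin (n + 1)) = i.succ := by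
      apply Fin.ext
      simp [Nat.min_eq_left i.2]
    have h2 : (⟨min (i : ℕ) n, Nat.lt_succ_of_le (min_le_right _ n)⟩ : Fin (n + 1))
        = i.castSucc := by
      apply Fin.ext
      simp [Nat.min_eq_left i.2.le]
    rw [hf]
    simp only [h1, h2]
  calc ∑ i : Fin n, (((t i.succ : ℝ)) - ((t i.castSucc : ℝ)))
      = ∑ i : Fin n, (f ((i : ℕ) + 1) - f (i : ℕ)) := Finset.sum_congr rfl fun i _ => hstep i
    _ = ∑ i ∈ Finset.range n, (f (i + 1) - f i) :=
        Fin.sum_univ_eq_sum_range (fun k => f (k + 1) - f k) n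
    _ = f n - f 0 := Finset.sum_range_sub f n
    _ ≤ 1 - 0 := by
        have hub := (t ⟨min n n, Nat.lt_succ_of_le (min_le_right n n)⟩).2.2
        have hlb := (t ⟨min 0 n, Nat.lt_succ_of_le (min_le_right 0 n)⟩).2.1
        simp only [hf]
        linarith
    _ = 1 := by ring

end Geodesic

section Energy

variable {d : ℕ}

lemma torusDist_geoFun_sq_le (x : Td d) (r : Fin d → ℝ) (s s' : UI) :
    torusDist (geoFun x r s) (geoFun x r s') ^ 2 ≤ ((s' : ℝ) - (s : ℝ)) ^ 2 * ∑ i, r i ^ 2 := by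
  rw [torusDist_sq]
  have hpt : ∀ i, dist (geoFun x r s i) (geoFun x r s' i) ^ 2
      ≤ ((s' : ℝ) - (s : ℝ)) ^ 2 * r i ^ 2 := by
    intro i
    have h1 : dist (geoFun x r s i) (geoFun x r s' i)
        = dist ((((s : ℝ) * r i : ℝ)) : AddCircle (1:ℝ)) ((((s' : ℝ) * r i : ℝ)) : AddCircle (1:ℝ)) :=
      dist_add_left _ _ _
    have h2 : dist ((((s : ℝ) * r i : ℝ)) : AddCircle (1:ℝ)) ((((s' : ℝ) * r i : ℝ)) : AddCircle (1:ℝ))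
        ≤ |((s : ℝ) - (s' : ℝ)) * r i| := by
      rw [dist_eq_norm]
      have : (((((s : ℝ) * r i : ℝ)) : AddCircle (1:ℝ)) - ((((s' : ℝ) * r i : ℝ)) : AddCircle (1:ℝ)))
          = ((((s : ℝ) * r i - (s' : ℝ) * r i : ℝ)) : AddCircle (1:ℝ)) := by
        push_cast
        rfl
      rw [this]
      refine (norm_coe_le_abs _).trans ?_
      rw [← sub_mul]
    have h3 : dist (geoFun x r s i) (geoFun x r s' i) ≤ |((s : ℝ) - (s' : ℝ)) * r i| :=
      h1.le.trans h2
    calc dist (geoFun x r s i) (geoFun x r s' i) ^ 2 ≤ (|((s : ℝ) - (s' : ℝ)) * r i|) ^ 2 :=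
          pow_le_pow_left₀ dist_nonneg h3 2
      _ = ((s' : ℝ) - (s : ℝ)) ^ 2 * r i ^ 2 := by
          rw [sq_abs, mul_pow]
          ring
  calc ∑ i, dist (geoFun x r s i) (geoFun x r s' i) ^ 2
      ≤ ∑ i, ((s' : ℝ) - (s : ℝ)) ^ 2 * r i ^ 2 := Finset.sum_le_sum fun i _ => hpt i
    _ = ((s' : ℝ) - (s : ℝ)) ^ 2 * ∑ i, r i ^ 2 := by rw [Finset.mul_sum]

lemma energy_geoFun_le (x : Td d) (r : Fin d → ℝ) :
    energy (geoFun x r) ≤ ENNReal.ofReal (∑ i, r i ^ 2) := by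
  set R2 : ℝ := ∑ i, r i ^ 2 with hR2
  have hR2nn : 0 ≤ R2 := Finset.sum_nonneg fun i _ => sq_nonneg _
  rw [energy]
  refine iSup_le fun n => iSup_le fun t => iSup_le fun ht => ?_
  have hterm : ∀ i : Fin n,
      ENNReal.ofReal (torusDist (geoFun x r (t i.castSucc)) (geoFun x r (t i.succ)) ^ 2) /
        ENNReal.ofReal ((t i.succ : ℝ) - (t i.castSucc : ℝ))
      ≤ ENNReal.ofReal (((t i.succ : ℝ) - (t i.castSucc : ℝ)) * R2) := by
    intro i
    set Δ : ℝ := (t i.succ : ℝ) - (t i.castSucc : ℝ) with hΔ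
    have hΔnn : 0 ≤ Δ := by
      have : t i.castSucc ≤ t i.succ := ht (Fin.castSucc_lt_succ (i := i)).le
      simp only [hΔ, sub_nonneg]
      exact_mod_cast this
    rcases eq_or_lt_of_le hΔnn with h0 | hpos
    · have hts : t i.castSucc = t i.succ := by
        apply Subtype.ext
        have : (t i.succ : ℝ) = (t i.castSucc : ℝ) := by
          have := h0.symm
          rw [hΔ] at this
          linarith
        exact this.symm
      rw [hts]
      have : torusDist (geoFun x r (t i.succ)) (geoFun x r (t i.succ)) = 0 := by
        rw [torusDist]
        simp
      rw [this]
      simp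
    · rw [ENNReal.div_le_iff (by positivity) ENNReal.ofReal_ne_top]
      rw [← ENNReal.ofReal_mul (by positivity)]
      apply ENNReal.ofReal_le_ofReal
      calc torusDist (geoFun x r (t i.castSucc)) (geoFun x r (t i.succ)) ^ 2
          ≤ Δ ^ 2 * R2 := torusDist_geoFun_sq_le x r _ _
        _ = Δ * R2 * Δ := by ring
  calc (∑ i : Fin n,
        ENNReal.ofReal (torusDist (geoFun x r (t i.castSucc)) (geoFun x r (t i.succ)) ^ 2) /
          ENNReal.ofReal ((t i.succ : ℝ) - (t i.castSucc : ℝ)))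
      ≤ ∑ i : Fin n, ENNReal.ofReal (((t i.succ : ℝ) - (t i.castSucc : ℝ)) * R2) :=
        Finset.sum_le_sum fun i _ => hterm i
    _ = ENNReal.ofReal (∑ i : Fin n, ((t i.succ : ℝ) - (t i.castSucc : ℝ)) * R2) := by
        rw [ENNReal.ofReal_sum_of_nonneg]
        intro i _
        have : t i.castSucc ≤ t i.succ := ht (Fin.castSucc_lt_succ (i := i)).le
        have h : (t i.castSucc : ℝ) ≤ (t i.succ : ℝ) := by exact_mod_cast this
        nlinarith
    _ ≤ ENNReal.ofReal R2 := by
        apply ENNReal.ofReal_le_ofReal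
        rw [← Finset.sum_mul]
        calc (∑ i : Fin n, ((t i.succ : ℝ) - (t i.castSucc : ℝ))) * R2 ≤ 1 * R2 := by
              apply mul_le_mul_of_nonneg_right (sum_partition_le t ht) hR2nn
          _ = R2 := one_mul _

lemma action_geo_le (q : Td d × Td d) :
    action (geo q) ≤ ENNReal.ofReal (torusDist q.1 q.2 ^ 2) / 2 := by
  rw [action]
  apply ENNReal.div_le_div_right
  refine (energy_geoFun_le q.1 _).trans ?_
  apply ENNReal.ofReal_le_ofReal
  rw [torusDist_sq]
  apply le_of_eq
  refine Finset.sum_congr rfl fun i _ => ?_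
  rw [addCircle_dist_eq (q.1 i) (q.2 i), sq_abs]

lemma ofReal_torusDist_sq_le_energy (ω : TPath d) :
    ENNReal.ofReal (torusDist (evalAt 0 ω) (evalAt 1 ω) ^ 2) ≤ energy ω := by
  rw [energy]
  refine le_iSup_of_le 1 ?_
  refine le_iSup_of_le ![clamp 0, clamp 1] ?_
  have h01 : clamp 0 ≤ clamp 1 := by
    apply Subtype.coe_le_coe.mp
    rw [clamp_zero_coe, clamp_one_coe]
    exact zero_le_one
  have hmono : Monotone ![clamp 0, clamp 1] := by
    intro a b hab
    fin_cases a <;> fin_cases b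
    · exact le_rfl
    · exact h01
    · exact absurd hab (by decide)
    · exact le_rfl
  refine le_iSup_of_le hmono ?_
  apply le_of_eq
  rw [Fin.sum_univ_one]
  have h0 : (![clamp 0, clamp 1] : Fin 2 → UI) ((0 : Fin 1).castSucc) = clamp 0 := rfl
  have h1 : (![clamp 0, clamp 1] : Fin 2 → UI) ((0 : Fin 1).succ) = clamp 1 := rfl
  rw [h0, h1]
  rw [show ((clamp 1 : UI) : ℝ) - ((clamp 0 : UI) : ℝ) = 1 by rw [clamp_zero_coe, clamp_one_coe]; ring]
  simp only [ENNReal.ofReal_one]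
  rw [div_one]
  rfl

end Energy

section Chain

variable {d : ℕ}

instance (d : ℕ) : BorelSpace (Td d × Td d) := Prod.borelSpace

instance (d : ℕ) : BorelSpace ((Td d × Td d) × (Td d × Td d)) := Prod.borelSpace

instance (d : ℕ) : OpensMeasurableSpace ((Td d × Td d) × (Td d × Td d)) :=
  BorelSpace.opensMeasurable

lemma continuous_torusDist₂ {X : Type*} [TopologicalSpace X] {g h : X → Td d}
    (hg : Continuous g) (hh : Continuous h) : Continuous fun x => torusDist (g x) (h x) := by
  unfold torusDist
  apply Real.continuous_sqrt.comp
  apply continuous_finset_sum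
  intro i _
  exact (((continuous_apply i).comp hg).dist ((continuous_apply i).comp hh)).pow 2

lemma continuous_endpoints : Continuous (endpoints (d := d)) :=
  (continuous_eval_const (clamp 0)).prodMk
    (continuous_eval_const (clamp 1))

lemma measurable_ofReal_torusDist_sq :
    Measurable fun p : Td d × Td d => ENNReal.ofReal (torusDist p.1 p.2 ^ 2) :=
  ((continuous_torusDist.pow 2)).measurable.ennreal_ofReal

lemma eLpNorm_two_eq {α : Type*} [MeasurableSpace α] (P : Measure α) (f : α → ℝ)
    (hf : ∀ x, 0 ≤ f x) :
    eLpNorm f 2 P = (∫⁻ x, ENNReal.ofReal (f x ^ 2) ∂P) ^ (1/2 : ℝ) := by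
  rw [eLpNorm_eq_lintegral_rpow_enorm_toReal two_ne_zero ENNReal.ofNat_ne_top]
  simp only [ENNReal.toReal_ofNat]
  congr 1
  refine lintegral_congr fun x => ?_
  rw [Real.enorm_eq_ofReal (hf x)]
  have h2 : ((2:ℝ)) = ((2:ℕ):ℝ) := by norm_num
  rw [h2, ENNReal.rpow_natCast, ← ENNReal.ofReal_pow (hf x)]

set_option maxHeartbeats 1000000 in
set_option synthInstance.maxHeartbeats 1000000 in
lemma coupling_chain (μ ν : Measure (Td d × Td d))
    (Γ : Measure ((Td d × Td d) × (Td d × Td d)))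
    (hf : Γ.map Prod.fst = μ) (hs : Γ.map Prod.snd = ν) :
    (∫⁻ p, ENNReal.ofReal (torusDist p.1 p.2 ^ 2) ∂ν) ^ (1/2:ℝ)
      ≤ (∫⁻ p, ENNReal.ofReal (torusDist p.1 p.2 ^ 2) ∂μ) ^ (1/2:ℝ)
        + (2 * ∫⁻ p, ENNReal.ofReal (D2sq p.1 p.2) ∂Γ) ^ (1/2:ℝ) := by
  set f1 : ((Td d × Td d) × (Td d × Td d)) → ℝ := fun p => torusDist p.2.1 p.2.2 with hf1
  set f2 : ((Td d × Td d) × (Td d × Td d)) → ℝ := fun p => torusDist p.1.1 p.1.2 with hf2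
  set f3 : ((Td d × Td d) × (Td d × Td d)) → ℝ := fun p => torusDist p.1.1 p.2.1 + torusDist p.1.2 p.2.2 with hf3
  have hc2 : Continuous f2 := continuous_torusDist₂
    ((continuous_fst.comp continuous_fst)) ((continuous_snd.comp continuous_fst))
  have hc3 : Continuous f3 :=
    (continuous_torusDist₂ (continuous_fst.comp continuous_fst)
      (continuous_fst.comp continuous_snd)).add
    (continuous_torusDist₂ (continuous_snd.comp continuous_fst)
      (continuous_snd.comp continuous_snd))
  have hn1 : ∀ p, 0 ≤ f1 p := fun p => torusDist_nonneg _ _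
  have hn2 : ∀ p, 0 ≤ f2 p := fun p => torusDist_nonneg _ _
  have hn3 : ∀ p, 0 ≤ f3 p := fun p => add_nonneg (torusDist_nonneg _ _) (torusDist_nonneg _ _)
  have h1 : eLpNorm f1 2 Γ = (∫⁻ p, ENNReal.ofReal (torusDist p.1 p.2 ^ 2) ∂ν) ^ (1/2:ℝ) := by
    rw [eLpNorm_two_eq Γ f1 hn1, ← hs,
      lintegral_map measurable_ofReal_torusDist_sq measurable_snd]
  have h2 : eLpNorm f2 2 Γ = (∫⁻ p, ENNReal.ofReal (torusDist p.1 p.2 ^ 2) ∂μ) ^ (1/2:ℝ) := by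
    rw [eLpNorm_two_eq Γ f2 hn2, ← hf,
      lintegral_map measurable_ofReal_torusDist_sq measurable_fst]
  have h3 : eLpNorm f3 2 Γ ≤ (2 * ∫⁻ p, ENNReal.ofReal (D2sq p.1 p.2) ∂Γ) ^ (1/2:ℝ) := by
    rw [eLpNorm_two_eq Γ f3 hn3]
    refine ENNReal.rpow_le_rpow ?_ (by norm_num)
    calc ∫⁻ x, ENNReal.ofReal (f3 x ^ 2) ∂Γ
        ≤ ∫⁻ x, 2 * ENNReal.ofReal (D2sq x.1 x.2) ∂Γ := by
          refine lintegral_mono fun p => ?_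
          have hb : f3 p ^ 2 ≤ 2 * D2sq p.1 p.2 := by
            have h' : f3 p = torusDist p.1.1 p.2.1 + torusDist p.1.2 p.2.2 := rfl
            rw [h', D2sq]
            nlinarith [sq_nonneg (torusDist p.1.1 p.2.1 - torusDist p.1.2 p.2.2)]
          calc ENNReal.ofReal (f3 p ^ 2) ≤ ENNReal.ofReal (2 * D2sq p.1 p.2) :=
                ENNReal.ofReal_le_ofReal hb
            _ = 2 * ENNReal.ofReal (D2sq p.1 p.2) := by
                rw [ENNReal.ofReal_mul (by norm_num)]
                norm_num
      _ = 2 * ∫⁻ p, ENNReal.ofReal (D2sq p.1 p.2) ∂Γ :=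
          lintegral_const_mul' 2 _ ENNReal.ofNat_ne_top
  have htri : ∀ p, ‖f1 p‖ ≤ ‖(f2 + f3) p‖ := by
    intro p
    have hval : (f2 + f3) p = f2 p + f3 p := rfl
    rw [Real.norm_eq_abs, Real.norm_eq_abs, abs_of_nonneg (hn1 p), hval,
      abs_of_nonneg (add_nonneg (hn2 p) (hn3 p))]
    exact torusDist_triangle4 p.1.1 p.1.2 p.2.1 p.2.2
  calc (∫⁻ p, ENNReal.ofReal (torusDist p.1 p.2 ^ 2) ∂ν) ^ (1/2:ℝ)
      = eLpNorm f1 2 Γ := h1.symm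
    _ ≤ eLpNorm (f2 + f3) 2 Γ := eLpNorm_mono htri
    _ ≤ eLpNorm f2 2 Γ + eLpNorm f3 2 Γ :=
        eLpNorm_add_le hc2.aestronglyMeasurable hc3.aestronglyMeasurable one_le_two
    _ ≤ (∫⁻ p, ENNReal.ofReal (torusDist p.1 p.2 ^ 2) ∂μ) ^ (1/2:ℝ)
        + (2 * ∫⁻ p, ENNReal.ofReal (D2sq p.1 p.2) ∂Γ) ^ (1/2:ℝ) := by
        rw [h2]
        exact add_le_add le_rfl h3
  
end Chain

lemma sqrt_add_le' (u v : ℝ) (hu : 0 ≤ u) (hv : 0 ≤ v) :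
    Real.sqrt (u + v) ≤ Real.sqrt u + Real.sqrt v := by
  have h1 : u + v ≤ (Real.sqrt u + Real.sqrt v) ^ 2 := by
    have hsu := Real.sq_sqrt hu
    have hsv := Real.sq_sqrt hv
    have h2 := Real.sqrt_nonneg u
    have h3 := Real.sqrt_nonneg v
    nlinarith
  calc Real.sqrt (u + v) ≤ Real.sqrt ((Real.sqrt u + Real.sqrt v) ^ 2) := Real.sqrt_le_sqrt h1
    _ = Real.sqrt u + Real.sqrt v := Real.sqrt_sq (by positivity)

/-- consequence of Step one of the proof of Lemma 1. Given bistochastic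
`μ, ν` and a generalized flow `η` with endpoints condition `μ` and finite action, there is
a generalized flow `η'` with endpoints condition `ν` and
`𝒜(η') ≤ (√𝒜(η) + d_MK(μ,ν))²`. -/
theorem exists_flow_change_endpoints (d : ℕ) (μ ν : Measure (Td d × Td d))
    (hμ : Bistochastic μ) (hν : Bistochastic ν)
    (η : Measure (TPath d)) (hprob : IsProbabilityMeasure η)
    (hend : η.map endpoints = μ) (hfin : flowAction η ≠ ⊤) :
    ∃ η' : Measure (TPath d), IsProbabilityMeasure η' ∧ η'.map endpoints = ν ∧
      flowAction η' ≤
        ENNReal.ofReal ((Real.sqrt (flowAction η).toReal + dMK μ ν) ^ 2) := by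
  classical
  haveI hμp : IsProbabilityMeasure μ := hμ.1
  haveI hνp : IsProbabilityMeasure ν := hν.1
  refine ⟨ν.map geo, Measure.isProbabilityMeasure_map measurable_geo.aemeasurable, ?_, ?_⟩
  · rw [Measure.map_map continuous_endpoints.measurable measurable_geo, endpoints_geo,
      Measure.map_id]
  · set Nν := ∫⁻ p : Td d × Td d, ENNReal.ofReal (torusDist p.1 p.2 ^ 2) ∂ν with hNν
    set Nμ := ∫⁻ p : Td d × Td d, ENNReal.ofReal (torusDist p.1 p.2 ^ 2) ∂μ with hNμ
    set K := ⨅ (Γ : Measure ((Td d × Td d) × (Td d × Td d))) (_ : Coupling μ ν Γ),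
      ∫⁻ p, ENNReal.ofReal (D2sq p.1 p.2) ∂Γ with hK
    have hdMK : dMK μ ν = Real.sqrt K.toReal := by rw [hK]; rfl
    have hdMK_nonneg : 0 ≤ dMK μ ν := by rw [hdMK]; exact Real.sqrt_nonneg _
    -- Step 1 : the action of the new flow is at most `Nν / 2`.
    have step1 : flowAction (ν.map geo) ≤ Nν / 2 := by
      rw [flowAction]
      calc ∫⁻ ω, action ω ∂(ν.map geo) ≤ ∫⁻ q, action (geo q) ∂ν :=
            lintegral_map_le _ _
        _ ≤ ∫⁻ q, ENNReal.ofReal (torusDist q.1 q.2 ^ 2) / 2 ∂ν :=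
            lintegral_mono fun q => action_geo_le q
        _ = Nν / 2 := by
            have he : ∀ q : Td d × Td d, ENNReal.ofReal (torusDist q.1 q.2 ^ 2) / 2
                = 2⁻¹ * ENNReal.ofReal (torusDist q.1 q.2 ^ 2) := fun q => by
              rw [div_eq_mul_inv, mul_comm]
            simp_rw [he]
            rw [lintegral_const_mul' _ _ (by simp : (2:ℝ≥0∞)⁻¹ ≠ ⊤), mul_comm,
              ← div_eq_mul_inv]
    -- Step 2 : `Nμ` is controlled by the action of `η`.
    have step2 : Nμ ≤ 2 * flowAction η := by
      rw [hNμ, ← hend, lintegral_map measurable_ofReal_torusDist_sq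
        continuous_endpoints.measurable]
      have hpt : ∀ ω : TPath d,
          ENNReal.ofReal (torusDist (endpoints ω).1 (endpoints ω).2 ^ 2) ≤ 2 * action ω := by
        intro ω
        have h2 : 2 * action ω = energy ω := by
          rw [action, ENNReal.mul_div_cancel two_ne_zero ENNReal.ofNat_ne_top]
        rw [h2]
        exact ofReal_torusDist_sq_le_energy ω
      calc ∫⁻ ω, ENNReal.ofReal (torusDist (endpoints ω).1 (endpoints ω).2 ^ 2) ∂η
          ≤ ∫⁻ ω, 2 * action ω ∂η := lintegral_mono hpt
        _ = 2 * flowAction η := by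
            rw [flowAction, lintegral_const_mul' 2 _ ENNReal.ofNat_ne_top]
    -- finiteness
    have h2fin : (2 : ℝ≥0∞) * flowAction η ≠ ⊤ := ENNReal.mul_ne_top ENNReal.ofNat_ne_top hfin
    have hNμ_ne_top : Nμ ≠ ⊤ := ne_top_of_le_ne_top h2fin step2
    have hNν_ne_top : Nν ≠ ⊤ := by
      refine ne_top_of_le_ne_top (ENNReal.ofReal_ne_top (r := (d:ℝ)/4)) ?_
      calc Nν ≤ ∫⁻ _p : Td d × Td d, ENNReal.ofReal ((d:ℝ)/4) ∂ν :=
            lintegral_mono fun p => ENNReal.ofReal_le_ofReal (torusDist_sq_le _ _)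
        _ = ENNReal.ofReal ((d:ℝ)/4) := by rw [lintegral_const, measure_univ, mul_one]
    have hcoup0 : Coupling μ ν (μ.prod ν) := by
      constructor
      · rw [Measure.map_fst_prod, measure_univ, one_smul]
      · rw [Measure.map_snd_prod, measure_univ, one_smul]
    have hK_ne_top : K ≠ ⊤ := by
      refine ne_top_of_le_ne_top (ENNReal.ofReal_ne_top (r := (d:ℝ)/2)) ?_
      refine le_trans (hK ▸ iInf₂_le (μ.prod ν) hcoup0) ?_
      calc ∫⁻ p, ENNReal.ofReal (D2sq p.1 p.2) ∂(μ.prod ν)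
          ≤ ∫⁻ _p, ENNReal.ofReal ((d:ℝ)/2) ∂(μ.prod ν) := by
            refine lintegral_mono fun p => ENNReal.ofReal_le_ofReal ?_
            have h1 := torusDist_sq_le p.1.1 p.2.1
            have h2 := torusDist_sq_le p.1.2 p.2.2
            rw [D2sq]
            linarith
        _ = ENNReal.ofReal ((d:ℝ)/2) := by rw [lintegral_const, measure_univ, mul_one]
    -- Step 4 : the square-root inequality
    have hsqrt : Real.sqrt Nν.toReal
        ≤ Real.sqrt 2 * (Real.sqrt (flowAction η).toReal + dMK μ ν) := by
      refine le_of_forall_pos_le_add fun δ hδ => ?_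
      have hs2 : (0:ℝ) < Real.sqrt 2 := Real.sqrt_pos.mpr (by norm_num)
      set ε : ℝ := (δ / Real.sqrt 2) ^ 2 with hε
      have hεpos : 0 < ε := by positivity
      -- choose an almost optimal coupling
      have hlt0 : K < K + ENNReal.ofReal ε :=
        ENNReal.lt_add_right hK_ne_top (ENNReal.ofReal_pos.mpr hεpos).ne'
      conv_lhs at hlt0 => rw [hK]
      simp only [iInf_lt_iff] at hlt0
      obtain ⟨Γ, hΓ, hcost⟩ := hlt0
      have hC_ne_top : (∫⁻ p, ENNReal.ofReal (D2sq p.1 p.2) ∂Γ) ≠ ⊤ :=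
        ne_top_of_lt hcost
      set C := ∫⁻ p, ENNReal.ofReal (D2sq p.1 p.2) ∂Γ with hCdef
      have hchain := coupling_chain μ ν Γ hΓ.1 hΓ.2
      rw [← hNν, ← hNμ, ← hCdef] at hchain
      have hrhs_ne : Nμ ^ (1/2:ℝ) + (2 * C) ^ (1/2:ℝ) ≠ ⊤ := by
        refine ENNReal.add_ne_top.mpr ⟨?_, ?_⟩
        · exact ENNReal.rpow_ne_top_of_nonneg (by norm_num) hNμ_ne_top
        · exact ENNReal.rpow_ne_top_of_nonneg (by norm_num)
            (ENNReal.mul_ne_top ENNReal.ofNat_ne_top hC_ne_top)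
      have hreal := ENNReal.toReal_mono hrhs_ne hchain
      rw [ENNReal.toReal_add
          (ENNReal.rpow_ne_top_of_nonneg (by norm_num) hNμ_ne_top)
          (ENNReal.rpow_ne_top_of_nonneg (by norm_num)
            (ENNReal.mul_ne_top ENNReal.ofNat_ne_top hC_ne_top)),
        ← ENNReal.toReal_rpow, ← ENNReal.toReal_rpow, ← ENNReal.toReal_rpow,
        ← Real.sqrt_eq_rpow, ← Real.sqrt_eq_rpow, ← Real.sqrt_eq_rpow,
        ENNReal.toReal_mul, ENNReal.toReal_ofNat] at hreal
      -- bound the two square roots on the right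
      have hb1 : Real.sqrt Nμ.toReal ≤ Real.sqrt 2 * Real.sqrt (flowAction η).toReal := by
        rw [← Real.sqrt_mul (by norm_num)]
        apply Real.sqrt_le_sqrt
        have := ENNReal.toReal_mono h2fin step2
        rwa [ENNReal.toReal_mul, ENNReal.toReal_ofNat] at this
      have hb2 : Real.sqrt (2 * C.toReal)
          ≤ Real.sqrt 2 * (Real.sqrt K.toReal + Real.sqrt ε) := by
        have hCle : C.toReal ≤ K.toReal + ε := by
          have := ENNReal.toReal_mono
            (by simp [ENNReal.add_ne_top, hK_ne_top, ENNReal.ofReal_ne_top]) hcost.le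
          rwa [ENNReal.toReal_add hK_ne_top ENNReal.ofReal_ne_top,
            ENNReal.toReal_ofReal hεpos.le] at this
        calc Real.sqrt (2 * C.toReal) ≤ Real.sqrt (2 * (K.toReal + ε)) := by
              apply Real.sqrt_le_sqrt
              linarith
          _ = Real.sqrt 2 * Real.sqrt (K.toReal + ε) := Real.sqrt_mul (by norm_num) _
          _ ≤ Real.sqrt 2 * (Real.sqrt K.toReal + Real.sqrt ε) := by
              apply mul_le_mul_of_nonneg_left _ hs2.le
              exact sqrt_add_le' _ _ ENNReal.toReal_nonneg hεpos.le
      have hsqε : Real.sqrt ε = δ / Real.sqrt 2 := by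
        rw [hε, Real.sqrt_sq (by positivity)]
      have hs2δ : Real.sqrt 2 * Real.sqrt ε = δ := by
        rw [hsqε]
        field_simp
      rw [hdMK]
      calc Real.sqrt Nν.toReal
          ≤ Real.sqrt Nμ.toReal + Real.sqrt (2 * C.toReal) := hreal
        _ ≤ Real.sqrt 2 * Real.sqrt (flowAction η).toReal
            + (Real.sqrt 2 * (Real.sqrt K.toReal + Real.sqrt ε)) := add_le_add hb1 hb2
        _ = Real.sqrt 2 * (Real.sqrt (flowAction η).toReal + Real.sqrt K.toReal) + δ := by
            rw [← hs2δ]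
            ring
    -- Step 5 : conclusion
    have hfinal : Nν.toReal
        ≤ 2 * (Real.sqrt (flowAction η).toReal + dMK μ ν) ^ 2 := by
      have h1 : Nν.toReal = Real.sqrt Nν.toReal ^ 2 :=
        (Real.sq_sqrt ENNReal.toReal_nonneg).symm
      rw [h1]
      calc Real.sqrt Nν.toReal ^ 2
          ≤ (Real.sqrt 2 * (Real.sqrt (flowAction η).toReal + dMK μ ν)) ^ 2 :=
            pow_le_pow_left₀ (Real.sqrt_nonneg _) hsqrt 2
        _ = 2 * (Real.sqrt (flowAction η).toReal + dMK μ ν) ^ 2 := by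
            rw [mul_pow, Real.sq_sqrt (by norm_num : (0:ℝ) ≤ 2)]
    refine step1.trans ?_
    rw [ENNReal.div_le_iff two_ne_zero ENNReal.ofNat_ne_top]
    calc Nν = ENNReal.ofReal Nν.toReal := (ENNReal.ofReal_toReal hNν_ne_top).symm
      _ ≤ ENNReal.ofReal (2 * (Real.sqrt (flowAction η).toReal + dMK μ ν) ^ 2) :=
          ENNReal.ofReal_le_ofReal hfinal
      _ = ENNReal.ofReal ((Real.sqrt (flowAction η).toReal + dMK μ ν) ^ 2) * 2 := by
          rw [ENNReal.ofReal_mul (by norm_num : (0:ℝ) ≤ 2)]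
          rw [mul_comm]
          norm_num

end Brenier
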